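/- Let P_n = v_1 ... v_n (n ≥ 3) be a path graph with P_n = PCG(T, d_min, d_max). If there exists a non-edge (v_i, v_j) with d_T(v_i, v_j) < d_min (a red non-edge), then there exists a non-edge between two nodes at path-distance exactly 2, say (v_k, v_{k+2}), with d_T(v_k, v_{k+2}) < d_min. -/
import Mathlib


open SimpleGraph

/-- A tree with positive real edge weights. -/
structure WTree (α : Type) where
  g : SimpleGraph α
  isTree : g.IsTree
  w : α → α → ℝ
  w_symm : ∀ a b, w a b = w b a
  w_pos : ∀ a b, g.Adj a b → 0 < w a b

/-- The weighted distance between two vertices of a weighted tree: the sum of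
the weights of the edges on the unique path between them. -/
noncomputable def WTree.dist {α : Type} (T : WTree α) (u v : α) : ℝ :=
  (((T.isTree.existsUnique_path u v).exists.choose).darts.map
    (fun d => T.w d.toProd.1 d.toProd.2)).sum

namespace WTree

variable {α : Type} (T : WTree α)

attribute [local instance] Classical.propDecidable

/-- weight of an edge -/
noncomputable def ew : Sym2 α → ℝ := Sym2.lift ⟨T.w, T.w_symm⟩

@[simp] lemma ew_mk (a b : α) : T.ew s(a, b) = T.w a b := rfl

/-- weight of a walk -/
noncomputable def pw {u v : α} (p : T.g.Walk u v) : ℝ := (p.edges.map T.ew).sum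

lemma ew_pos {e : Sym2 α} (he : e ∈ T.g.edgeSet) : 0 < T.ew e := by
  induction e using Sym2.ind with
  | _ a b => exact T.w_pos a b he

lemma pw_nonneg {u v : α} (p : T.g.Walk u v) : 0 ≤ T.pw p := by
  apply List.sum_nonneg
  intro x hx
  obtain ⟨e, he, rfl⟩ := List.mem_map.1 hx
  exact (T.ew_pos (p.edges_subset_edgeSet he)).le

lemma pw_append {u v x : α} (p : T.g.Walk u v) (q : T.g.Walk v x) :
    T.pw (p.append q) = T.pw p + T.pw q := by
  simp [pw, SimpleGraph.Walk.edges_append]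

/-- the unique path between two vertices -/
noncomputable def thePath (u v : α) : T.g.Walk u v :=
  (T.isTree.existsUnique_path u v).exists.choose

lemma thePath_isPath (u v : α) : (T.thePath u v).IsPath :=
  (T.isTree.existsUnique_path u v).exists.choose_spec

lemma eq_thePath {u v : α} {p : T.g.Walk u v} (hp : p.IsPath) : p = T.thePath u v :=
  (T.isTree.existsUnique_path u v).unique hp (T.thePath_isPath u v)

lemma dist_eq_pw_thePath (u v : α) : T.dist u v = T.pw (T.thePath u v) := by
  simp only [dist, pw, SimpleGraph.Walk.edges, List.map_map, thePath]
  rfl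

lemma dist_eq_pw {u v : α} {p : T.g.Walk u v} (hp : p.IsPath) : T.dist u v = T.pw p := by
  rw [dist_eq_pw_thePath, T.eq_thePath hp]

lemma dist_nonneg (u v : α) : 0 ≤ T.dist u v := by
  rw [dist_eq_pw_thePath]; exact T.pw_nonneg _

lemma dist_self (u : α) : T.dist u u = 0 := by
  rw [T.dist_eq_pw (SimpleGraph.Walk.IsPath.nil (u := u))]
  simp [pw, SimpleGraph.Walk.edges]

lemma dist_symm (u v : α) : T.dist u v = T.dist v u := by
  rw [T.dist_eq_pw_thePath v u, T.dist_eq_pw (p := (T.thePath v u).reverse)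
    ((T.thePath_isPath v u).reverse)]
  simp [pw, SimpleGraph.Walk.edges_reverse, List.sum_reverse]

lemma dist_pos {u v : α} (huv : u ≠ v) : 0 < T.dist u v := by
  rw [dist_eq_pw_thePath]
  have hne : (T.thePath u v).edges ≠ [] := by
    intro h
    exact huv (SimpleGraph.Walk.eq_of_length_eq_zero (by
      simpa [SimpleGraph.Walk.length_edges] using congrArg List.length h))
  obtain ⟨e, l, hl⟩ := List.exists_cons_of_ne_nil hne
  have hpos : 0 < T.ew e := T.ew_pos ((T.thePath u v).edges_subset_edgeSet (by simp [hl]))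
  have : 0 ≤ (l.map T.ew).sum := by
    apply List.sum_nonneg
    intro x hx
    obtain ⟨e', he', rfl⟩ := List.mem_map.1 hx
    exact (T.ew_pos ((T.thePath u v).edges_subset_edgeSet (by simp [hl, he']))).le
  simp only [pw, hl, List.map_cons, List.sum_cons]
  linarith

lemma eq_of_dist_eq_zero {u v : α} (h : T.dist u v = 0) : u = v := by
  by_contra hne
  exact absurd h (ne_of_gt (T.dist_pos hne))

/-- key inequality: dist is at most the weight of any walk -/
lemma dist_le_pw {u v : α} (q : T.g.Walk u v) : T.dist u v ≤ T.pw q := by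
  rw [T.dist_eq_pw q.bypass_isPath]
  have hsub : q.bypass.edges ⊆ q.edges := q.edges_bypass_subset
  have hnd : q.bypass.edges.Nodup := q.bypass_isPath.isTrail.edges_nodup
  have hle : (q.bypass.edges : Multiset (Sym2 α)) ≤ (q.edges : Multiset (Sym2 α)) :=
    (Multiset.le_iff_subset (by exact_mod_cast hnd)).2 (by exact fun e he => hsub (by exact_mod_cast he))
  obtain ⟨m, hm⟩ := Multiset.le_iff_exists_add.1 hle
  have h1 : T.pw q.bypass = ((q.bypass.edges : Multiset (Sym2 α)).map T.ew).sum := by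
    simp [pw]
  have h2 : T.pw q = ((q.edges : Multiset (Sym2 α)).map T.ew).sum := by
    simp [pw]
  have hm0 : 0 ≤ (m.map T.ew).sum := by
    apply Multiset.sum_nonneg
    intro x hx
    obtain ⟨e, he, rfl⟩ := Multiset.mem_map.1 hx
    have : e ∈ (q.edges : Multiset (Sym2 α)) := hm ▸ (Multiset.mem_add.2 (Or.inr he))
    exact (T.ew_pos (q.edges_subset_edgeSet (by exact_mod_cast this))).le
  rw [h1, h2, hm]
  simp only [Multiset.map_add, Multiset.sum_add]
  linarith

lemma dist_triangle (a m b : α) : T.dist a b ≤ T.dist a m + T.dist m b := by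
  have := T.dist_le_pw ((T.thePath a m).append (T.thePath m b))
  rwa [pw_append, ← dist_eq_pw_thePath, ← dist_eq_pw_thePath] at this

/-- distance splits at a vertex of the path -/
lemma dist_split {u v m : α} (hm : m ∈ (T.thePath u v).support) :
    T.dist u v = T.dist u m + T.dist m v := by
  have hp := T.thePath_isPath u v
  conv_lhs => rw [T.dist_eq_pw_thePath u v, ← (T.thePath u v).take_spec hm]
  rw [pw_append, ← T.dist_eq_pw (hp.takeUntil hm), ← T.dist_eq_pw (hp.dropUntil hm)]

lemma thePath_take {u v m : α} (hm : m ∈ (T.thePath u v).support) :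
    (T.thePath u v).takeUntil m hm = T.thePath u m :=
  T.eq_thePath ((T.thePath_isPath u v).takeUntil hm)

lemma support_sub {u v m : α} (hm : m ∈ (T.thePath u v).support) :
    (T.thePath u m).support ⊆ (T.thePath u v).support := by
  rw [← T.thePath_take hm]
  exact SimpleGraph.Walk.support_takeUntil_subset _ hm

lemma mem_support_symm {u v m : α} (hm : m ∈ (T.thePath u v).support) :
    m ∈ (T.thePath v u).support := by
  have : (T.thePath u v).reverse = T.thePath v u :=
    T.eq_thePath ((T.thePath_isPath u v).reverse)
  rw [← this, SimpleGraph.Walk.support_reverse, List.mem_reverse]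
  exact hm

/-- first vertex of a walk satisfying a predicate -/
lemma exists_first {c a : α} (S : α → Prop) (w : T.g.Walk c a) (ha : S a) :
    ∃ (m : α) (w1 : T.g.Walk c m) (w2 : T.g.Walk m a),
      w = w1.append w2 ∧ S m ∧ ∀ z ∈ w1.support, S z → z = m := by
  induction w with
  | nil => exact ⟨_, SimpleGraph.Walk.nil, SimpleGraph.Walk.nil, rfl, ha, by simp⟩
  | @cons x y z h' q ih =>
    by_cases hx : S x
    · exact ⟨x, SimpleGraph.Walk.nil, SimpleGraph.Walk.cons h' q, rfl, hx, by simp⟩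
    · obtain ⟨m, w1, w2, heq, hm, hfirst⟩ := ih ha
      refine ⟨m, SimpleGraph.Walk.cons h' w1, w2, by rw [heq]; rfl, hm, ?_⟩
      intro t ht hSt
      rw [SimpleGraph.Walk.support_cons, List.mem_cons] at ht
      rcases ht with rfl | ht
      · exact absurd hSt hx
      · exact hfirst t ht hSt

lemma exists_median (a b c : α) :
    ∃ m, m ∈ (T.thePath a b).support ∧ m ∈ (T.thePath a c).support ∧
      m ∈ (T.thePath b c).support := by
  obtain ⟨m, w1, w2, heq, hm, hfirst⟩ :=
    T.exists_first (· ∈ (T.thePath a b).support) (T.thePath c a)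
      ((T.thePath a b).start_mem_support)
  have hw : (w1.append w2).IsPath := heq ▸ T.thePath_isPath c a
  have hw1 : w1.IsPath := hw.of_append_left
  set drop := (T.thePath a b).dropUntil m hm with hdrop
  have hdp : drop.IsPath := (T.thePath_isPath a b).dropUntil hm
  have hnd : (w1.append drop).IsPath := by
    rw [SimpleGraph.Walk.isPath_def, SimpleGraph.Walk.support_append]
    refine List.Nodup.append hw1.support_nodup (hdp.support_nodup.tail) ?_
    intro t ht1 ht2
    have htd : t ∈ drop.support := by
      rw [drop.support_eq_cons]; exact List.mem_cons_of_mem _ ht2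
    have htp : t ∈ (T.thePath a b).support :=
      (T.thePath a b).support_dropUntil_subset hm htd
    have : t = m := hfirst t ht1 htp
    subst this
    have := hdp.support_nodup
    rw [drop.support_eq_cons] at this
    exact (List.nodup_cons.1 this).1 ht2
  have hcb : w1.append drop = T.thePath c b := T.eq_thePath hnd
  have hmw1 : m ∈ w1.support := w1.end_mem_support
  refine ⟨m, hm, ?_, ?_⟩
  · apply T.mem_support_symm
    rw [← T.eq_thePath (heq ▸ T.thePath_isPath c a : (w1.append w2).IsPath)]
    exact SimpleGraph.Walk.subset_support_append_left _ _ hmw1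
  · apply T.mem_support_symm
    rw [← hcb]
    exact SimpleGraph.Walk.subset_support_append_left _ _ hmw1

lemma mem_path_of_dist_le {a b m1 m2 : α}
    (h1 : m1 ∈ (T.thePath a b).support) (h2 : m2 ∈ (T.thePath a b).support)
    (hle : T.dist a m1 ≤ T.dist a m2) : m1 ∈ (T.thePath a m2).support := by
  rw [← T.thePath_take h2] at *
  rcases (SimpleGraph.Walk.mem_support_append_iff _ _).1
      (by rwa [(T.thePath a b).take_spec h2] : m1 ∈ (((T.thePath a b).takeUntil m2 h2).append ((T.thePath a b).dropUntil m2 h2)).support) with h | h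
  · exact h
  · -- m1 on the second part: show m1 = m2
    have hdropPath : ((T.thePath a b).dropUntil m2 h2) = T.thePath m2 b :=
      T.eq_thePath ((T.thePath_isPath a b).dropUntil h2)
    have hsplit1 : T.dist a b = T.dist a m1 + T.dist m1 b := T.dist_split h1
    have hsplit2 : T.dist a b = T.dist a m2 + T.dist m2 b := T.dist_split h2
    have hm1' : m1 ∈ (T.thePath m2 b).support := hdropPath ▸ h
    have hsplit3 : T.dist m2 b = T.dist m2 m1 + T.dist m1 b := T.dist_split hm1'
    have h0 : T.dist m2 m1 = 0 := by
      have := T.dist_nonneg m2 m1; linarith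
    have : m2 = m1 := T.eq_of_dist_eq_zero h0
    subst this
    exact SimpleGraph.Walk.end_mem_support _

lemma four_point (a b c d : α) :
    T.dist a b + T.dist c d ≤
      max (T.dist a c + T.dist b d) (T.dist a d + T.dist b c) := by
  obtain ⟨m1, hm1ab, hm1ac, hm1bc⟩ := T.exists_median a b c
  obtain ⟨m2, hm2ab, hm2ad, hm2bd⟩ := T.exists_median a b d
  rcases le_total (T.dist a m1) (T.dist a m2) with hle | hle
  · have hm1am2 : m1 ∈ (T.thePath a m2).support := T.mem_path_of_dist_le hm1ab hm2ab hle
    have hm1ad : m1 ∈ (T.thePath a d).support := T.support_sub hm2ad hm1am2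
    have e1 : T.dist a d = T.dist a m1 + T.dist m1 d := T.dist_split hm1ad
    have e2 : T.dist b c = T.dist b m1 + T.dist m1 c := T.dist_split hm1bc
    have t1 : T.dist a b ≤ T.dist a m1 + T.dist m1 b := T.dist_triangle a m1 b
    have t2 : T.dist c d ≤ T.dist c m1 + T.dist m1 d := T.dist_triangle c m1 d
    have s1 : T.dist m1 b = T.dist b m1 := T.dist_symm m1 b
    have s2 : T.dist c m1 = T.dist m1 c := T.dist_symm c m1
    refine le_trans ?_ (le_max_right _ _)
    linarith
  · have hm2am1 : m2 ∈ (T.thePath a m1).support := T.mem_path_of_dist_le hm2ab hm1ab hle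
    have hm2ac : m2 ∈ (T.thePath a c).support := T.support_sub hm1ac hm2am1
    have e1 : T.dist a c = T.dist a m2 + T.dist m2 c := T.dist_split hm2ac
    have e2 : T.dist b d = T.dist b m2 + T.dist m2 d := T.dist_split hm2bd
    have t1 : T.dist a b ≤ T.dist a m2 + T.dist m2 b := T.dist_triangle a m2 b
    have t2 : T.dist c d ≤ T.dist c m2 + T.dist m2 d := T.dist_triangle c m2 d
    have s1 : T.dist m2 b = T.dist b m2 := T.dist_symm m2 b
    have s2 : T.dist c m2 = T.dist m2 c := T.dist_symm c m2
    refine le_trans ?_ (le_max_left _ _)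
    linarith

end WTree

/-- A vertex of a weighted tree is a leaf if it has exactly one neighbor. -/
def WTree.IsLeaf {α : Type} (T : WTree α) (v : α) : Prop :=
  ∃! u, T.g.Adj v u

/-- `G = PCG(T, dmin, dmax)` via the leaf-assignment `f`. -/
def IsPCGWith {V β : Type} (G : SimpleGraph V) (T : WTree β) (f : V → β)
    (dmin dmax : ℝ) : Prop :=
  Function.Injective f ∧ (∀ v, T.IsLeaf (f v)) ∧ (∀ b, T.IsLeaf b → ∃ v, f v = b) ∧
    ∀ u v : V, u ≠ v →
      (G.Adj u v ↔ dmin ≤ T.dist (f u) (f v) ∧ T.dist (f u) (f v) ≤ dmax)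

/-- A graph is a pairwise compatibility graph. -/
def IsPCG {V : Type} (G : SimpleGraph V) : Prop :=
  ∃ (β : Type) (T : WTree β) (f : V → β) (dmin dmax : ℝ),
    0 ≤ dmin ∧ dmin ≤ dmax ∧ IsPCGWith G T f dmin dmax

theorem path_red_two_non_edge {β : Type} (n : ℕ) (hn : 3 ≤ n)
    (T : WTree β) (f : Fin n → β) (dmin dmax : ℝ)
    (h0 : 0 ≤ dmin) (h1 : dmin ≤ dmax)
    (hpcg : IsPCGWith (SimpleGraph.pathGraph n) T f dmin dmax)
    (hred : ∃ i j : Fin n, i ≠ j ∧ ¬ (SimpleGraph.pathGraph n).Adj i j ∧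
      T.dist (f i) (f j) < dmin) :
    ∃ i j : Fin n, i.val + 2 = j.val ∧ T.dist (f i) (f j) < dmin := by
  classical
  obtain ⟨finj, hleaf, hsurj, hadj⟩ := hpcg
  have hAdjIff : ∀ x y : Fin n, x.val + 1 = y.val →
      dmin ≤ T.dist (f x) (f y) ∧ T.dist (f x) (f y) ≤ dmax := by
    intro x y hxy
    have hne : x ≠ y := by
      intro h; subst h; omega
    exact (hadj x y hne).1 (SimpleGraph.pathGraph_adj.2 (Or.inl hxy))
  have hNon : ∀ x y : Fin n, x.val + 2 ≤ y.val →
      T.dist (f x) (f y) < dmin ∨ dmax < T.dist (f x) (f y) := by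
    intro x y h2
    have hne : x ≠ y := by
      intro h; subst h; omega
    have hnadj : ¬ (SimpleGraph.pathGraph n).Adj x y := by
      rw [SimpleGraph.pathGraph_adj]; omega
    by_contra hcon
    push_neg at hcon
    exact hnadj ((hadj x y hne).2 ⟨hcon.1, hcon.2⟩)
  set P : ℕ → Prop := fun g => 2 ≤ g ∧ ∃ x y : Fin n, x.val + g = y.val ∧
    T.dist (f x) (f y) < dmin with hPdef
  have hex : ∃ g, P g := by
    obtain ⟨i, j, hne, hnadj, hd⟩ := hred
    have hna : ¬(i.val + 1 = j.val ∨ j.val + 1 = i.val) :=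
      fun hc => hnadj (SimpleGraph.pathGraph_adj.2 hc)
    rcases lt_trichotomy i.val j.val with h | h | h
    · exact ⟨j.val - i.val, by omega, i, j, by omega, hd⟩
    · exact absurd (Fin.ext h) hne
    · refine ⟨i.val - j.val, by omega, j, i, by omega, ?_⟩
      rw [T.dist_symm]; exact hd
  set g0 := Nat.find hex with hg0def
  have hPg0 : P g0 := Nat.find_spec hex
  have hmin : ∀ g, g < g0 → ¬ P g := fun g hg => Nat.find_min hex hg
  obtain ⟨hg2, i, j, hij, hD⟩ := hPg0
  by_cases hg3 : g0 = 2
  · exact ⟨i, j, by omega, hD⟩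
  have hg3' : 3 ≤ g0 := by omega
  exfalso
  have factA : ∀ x y : Fin n, x.val + 2 ≤ y.val → y.val - x.val < g0 →
      dmax < T.dist (f x) (f y) := by
    intro x y h2 hlt
    rcases hNon x y h2 with h | h
    · exact absurd ⟨by omega, x, y, by omega, h⟩ (hmin (y.val - x.val) hlt)
    · exact h
  have hjn : j.val < n := j.isLt
  set Q : ℕ → Prop := fun t => ∃ (ht : t < n), i.val < t ∧ t ≤ j.val ∧
      T.dist (f ⟨t, ht⟩) (f j) < T.dist (f i) (f ⟨t, ht⟩) with hQdef
  have hQj1 : Q (j.val - 1) := by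
    refine ⟨by omega, by omega, by omega, ?_⟩
    have h1 := hAdjIff ⟨j.val - 1, by omega⟩ j (by show j.val - 1 + 1 = j.val; omega)
    have h2 := factA i ⟨j.val - 1, by omega⟩
      (by show i.val + 2 ≤ j.val - 1; omega) (by show j.val - 1 - i.val < g0; omega)
    linarith [h1.2, h2]
  have hexk : ∃ t, Q t := ⟨j.val - 1, hQj1⟩
  set k := Nat.find hexk with hkdef
  obtain ⟨hkn, hik, hkj, hQkd⟩ := Nat.find_spec hexk
  have hkmin : ∀ t, t < k → ¬ Q t := fun t ht => Nat.find_min hexk ht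
  have hkle : k ≤ j.val - 1 := Nat.find_min' hexk hQj1
  have hnQi1 : ¬ Q (i.val + 1) := by
    rintro ⟨ht, _, _, hlt⟩
    have h1 := hAdjIff i ⟨i.val + 1, ht⟩ (by show i.val + 1 = i.val + 1; rfl)
    have h2 := factA ⟨i.val + 1, ht⟩ j
      (by show i.val + 1 + 2 ≤ j.val; omega) (by show j.val - (i.val + 1) < g0; omega)
    linarith [h1.2, h2]
  have hki2 : i.val + 2 ≤ k := by
    by_contra h
    have hk1 : k = i.val + 1 := by omega
    apply hnQi1
    rw [← hk1]
    exact ⟨hkn, hik, hkj, hQkd⟩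
  have hK'n : k - 1 < n := by omega
  have hnQk1 : ¬ Q (k - 1) := hkmin (k - 1) (by omega)
  have hnotQ : T.dist (f i) (f ⟨k - 1, hK'n⟩) ≤ T.dist (f ⟨k - 1, hK'n⟩) (f j) := by
    by_contra hc
    push_neg at hc
    exact hnQk1 ⟨hK'n, by omega, by omega, hc⟩
  set K : Fin n := ⟨k, hkn⟩ with hKdef
  set K' : Fin n := ⟨k - 1, hK'n⟩ with hK'def
  have hik2 : dmax < T.dist (f i) (f K) :=
    factA i K (by show i.val + 2 ≤ k; omega) (by show k - i.val < g0; omega)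
  have hk'j2 : dmax < T.dist (f K') (f j) :=
    factA K' j (by show k - 1 + 2 ≤ j.val; omega) (by show j.val - (k - 1) < g0; omega)
  have hkk' := hAdjIff K' K (by show k - 1 + 1 = k; omega)
  have FP := T.four_point (f i) (f K) (f K') (f j)
  have hs : T.dist (f K) (f K') = T.dist (f K') (f K) := T.dist_symm _ _
  rcases le_max_iff.1 FP with h | h
  · linarith [hQkd]
  · linarith [hkk'.2]
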